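/- (Main theorem) Let k be a commutative ring, R a k-algebra, and A a cocomplete k-linear abelian category. The functor Ψ : A_R → B_k(Mod R, A) defined by Ψ(𝓕) = − ⊗_R 𝓕 is an equivalence of categories. -/

import Mathlib

open CategoryTheory CategoryTheory.Limits MulOpposite

universe u

section Preamble

variable (k : Type*) [CommRing k] (R : Type u) [Ring R] [Algebra k R]
variable (A : Type*) [Category.{u} A] [Preadditive A] [CategoryTheory.Linear k A]

/-- A left `R`-module in the `k`-linear category `A`: an object together with a
ring homomorphism `ρ : R → End 𝓕` which is `k`-linear, i.e. a `k`-algebra homomorphism. -/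
structure LMod where
  X : A
  ρ : R →+* End X
  algebraMap_smul' : ∀ a : k, ρ (algebraMap k R a) = a • (𝟙 X)

variable {k R A}

/-- the `k`-module structure on right `R`-modules obtained by restriction of scalars -/
noncomputable instance (M : ModuleCat.{u} Rᵐᵒᵖ) : Module k M :=
  RestrictScalars.module k Rᵐᵒᵖ M

instance (M : ModuleCat.{u} Rᵐᵒᵖ) : IsScalarTower k Rᵐᵒᵖ M :=
  RestrictScalars.isScalarTower k Rᵐᵒᵖ M

/-- The `k`-linear structure on the category of right `R`-modules, `a • m = m · γ(a)`. -/
noncomputable instance : CategoryTheory.Linear k (ModuleCat.{u} Rᵐᵒᵖ) where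
  homModule _ _ := ModuleCat.Hom.instModule
  smul_comp := by
    intros
    ext
    dsimp only [ModuleCat.hom_comp, LinearMap.comp_apply, ModuleCat.hom_smul]
    rw [LinearMap.smul_apply, LinearMap.map_smul_of_tower]
    rfl

/-- `Hom_A(𝓕, N)` is a right `R`-module via `α · r := ρ(r) ≫ α`. -/
instance homRMod (F : LMod k R A) (N : A) : Module Rᵐᵒᵖ (F.X ⟶ N) where
  smul r α := F.ρ r.unop ≫ α
  one_smul α := by show F.ρ _ ≫ α = α; simp
  mul_smul r s α := by
    show F.ρ _ ≫ α = F.ρ _ ≫ F.ρ _ ≫ α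
    rw [unop_mul, map_mul, End.mul_def, Category.assoc]
  smul_zero r := by show _ ≫ (0 : F.X ⟶ N) = 0; simp
  smul_add r α β := by show _ ≫ (α + β) = _ ≫ α + _ ≫ β; simp
  add_smul r s α := by
    show F.ρ _ ≫ α = F.ρ _ ≫ α + F.ρ _ ≫ α
    rw [MulOpposite.unop_add, map_add]; exact Preadditive.add_comp _ _ _ _ _ _
  zero_smul α := by show F.ρ _ ≫ α = 0; rw [MulOpposite.unop_zero, map_zero]; exact Limits.zero_comp

lemma homRMod_smul_def (F : LMod k R A) {N : A} (r : Rᵐᵒᵖ) (α : F.X ⟶ N) :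
    r • α = F.ρ r.unop ≫ α := rfl

/-- The functor `Hom_A(𝓕, -) : A ⥤ Mod R`. -/
noncomputable def homFunctor (F : LMod k R A) : A ⥤ ModuleCat.{u} Rᵐᵒᵖ where
  obj N := ModuleCat.of Rᵐᵒᵖ (F.X ⟶ N)
  map {N N'} f := ModuleCat.ofHom
    { toFun := fun α => α ≫ f
      map_add' := fun α β => Preadditive.add_comp _ _ _ _ _ _
      map_smul' := fun r α => by
        show (F.ρ r.unop ≫ α) ≫ f = F.ρ r.unop ≫ (α ≫ f)
        rw [Category.assoc] }
  map_id N := by apply ModuleCat.hom_ext; apply LinearMap.ext; intro α; exact Category.comp_id α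
  map_comp f g := by
    apply ModuleCat.hom_ext; apply LinearMap.ext; intro α; exact (Category.assoc _ _ _).symm

/-- `R` as a right module over itself. -/
noncomputable abbrev RR : ModuleCat.{u} Rᵐᵒᵖ := ModuleCat.of Rᵐᵒᵖ Rᵐᵒᵖ

variable (R) in
/-- left multiplication `μ_x` by `x` on `R`, a right `R`-module map -/
def mulMap (x : R) : (RR : ModuleCat.{u} Rᵐᵒᵖ) ⟶ RR := ModuleCat.ofHom {
  toFun r := op (x * r.unop)
  map_add' r s := by
    apply unop_injective
    show x * (r + s).unop = _
    rw [show (r + s).unop = r.unop + s.unop from rfl, mul_add]; rfl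
  map_smul' s t := by
    apply unop_injective
    show x * (s • t).unop = ((s • op (x * t.unop)).unop)
    rw [show (s • t).unop = t.unop * s.unop from rfl,
      show (s • op (x * t.unop)).unop = (x * t.unop) * s.unop from rfl, mul_assoc] }

/-- Morphisms `𝓕 → 𝓖` of left `R`-modules in `A` induce natural transformations
`Hom_A(𝓖,-) ⟶ Hom_A(𝓕,-)`. -/
noncomputable def homPre {F G : LMod k R A} (φ : F.X ⟶ G.X)
    (h : ∀ r : R, F.ρ r ≫ φ = φ ≫ G.ρ r) : homFunctor G ⟶ homFunctor F where
  app N := ModuleCat.ofHom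
    { toFun := fun α => φ ≫ α
      map_add' := fun α β => Preadditive.comp_add _ _ _ _ _ _
      map_smul' := fun r α => by
        show φ ≫ G.ρ r.unop ≫ α = F.ρ r.unop ≫ φ ≫ α
        rw [← Category.assoc, ← h, Category.assoc] }
  naturality N N' f := by apply ModuleCat.hom_ext; apply LinearMap.ext; intro α; exact (Category.assoc _ _ _).symm

/-- `M ⊗ φ` : the natural transformation `- ⊗_R 𝓕 ⟶ - ⊗_R 𝓖` induced by `φ : 𝓕 ⟶ 𝓖`,
obtained as the conjugate (mate) of `homPre φ`. -/
noncomputable def tensorMap {F G : LMod k R A} {TF TG : ModuleCat.{u} Rᵐᵒᵖ ⥤ A}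
    (adjF : TF ⊣ homFunctor F) (adjG : TG ⊣ homFunctor G) (φ : F.X ⟶ G.X)
    (h : ∀ r : R, F.ρ r ≫ φ = φ ≫ G.ρ r) : TF ⟶ TG :=
  (conjugateEquiv adjG adjF).symm (homPre φ h)

/-- The canonical map `ξ_𝓕 : 𝓕 ⟶ R ⊗_R 𝓕`. -/
noncomputable def xi {F : LMod k R A} {TF : ModuleCat.{u} Rᵐᵒᵖ ⥤ A}
    (adjF : TF ⊣ homFunctor F) : F.X ⟶ TF.obj RR :=
  (adjF.unit.app RR) (1 : Rᵐᵒᵖ)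

end Preamble

section Main

variable {k : Type*} [CommRing k] {R : Type u} [Ring R] [Algebra k R]
variable {A : Type*} [Category.{u} A] [Preadditive A] [CategoryTheory.Linear k A]

/-- The category `A_R` of left `R`-modules in `A`: morphisms are morphisms in `A`
commuting with the `R`-actions. -/
noncomputable instance : Category (LMod k R A) where
  Hom F G := {φ : F.X ⟶ G.X // ∀ r : R, F.ρ r ≫ φ = φ ≫ G.ρ r}
  id F := ⟨𝟙 F.X, fun r => by rw [Category.comp_id, Category.id_comp]⟩
  comp f g := ⟨f.1 ≫ g.1, fun r => by
    rw [← Category.assoc, f.2, Category.assoc, g.2, Category.assoc]⟩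
  id_comp f := Subtype.ext (Category.id_comp f.1)
  comp_id f := Subtype.ext (Category.comp_id f.1)
  assoc f g h := Subtype.ext (Category.assoc f.1 g.1 h.1)

variable (k R A) in
/-- The defining property of the category `B_k(Mod R, A)`: a functor `Mod R ⥤ A`
belongs to it iff it is `k`-linear, right exact, and commutes with direct sums. -/
def WattsObj (T : ModuleCat.{u} Rᵐᵒᵖ ⥤ A) : Prop :=
  T.Additive ∧
  (∀ (a : k) (X Y : ModuleCat.{u} Rᵐᵒᵖ) (f : X ⟶ Y), T.map (a • f) = a • T.map f) ∧
  Nonempty (PreservesFiniteColimits T) ∧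
  ∀ ι : Type u, Nonempty (PreservesColimitsOfShape (Discrete ι) T)

end Main

/-!
Ψ is fully faithful because, by Yoneda, `R`-equivariant maps `𝓕 ⟶ 𝓖` are the same as
natural transformations `Hom_A(𝓖, -) ⟶ Hom_A(𝓕, -)`, and passing to the left adjoints
`- ⊗_R 𝓖`, `- ⊗_R 𝓕` is bijective on transformations.

For essential surjectivity, a functor `T` in `B_k(Mod R, A)` makes `T(R)` a left `R`-module
in `A`, with `x` acting by `T` of left multiplication by `x`. The maps
`T(r ↦ r • m) : T(R) ⟶ T(M)` form a transformation `M ⟶ Hom_A(T(R), T(M))`, whose adjoint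
`M ⊗_R T(R) ⟶ T(M)` is an isomorphism for `M = R`. Both functors preserve coproducts and
cokernels, and every module is the cokernel of a map between free modules, so it is an
isomorphism everywhere.
-/

section HomPre

variable {k : Type*} [CommRing k] {R : Type u} [Ring R] [Algebra k R]
variable {A : Type*} [Category.{u} A] [Preadditive A] [CategoryTheory.Linear k A]

lemma homFunctor_natTrans_app_eq {F G : LMod k R A} (η : homFunctor G ⟶ homFunctor F) {N : A}
    (α : G.X ⟶ N) : η.app N α = η.app G.X (𝟙 G.X) ≫ α := by
  have h := ConcreteCategory.congr_hom (η.naturality α) (𝟙 G.X)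
  change η.app N (𝟙 G.X ≫ α) = η.app G.X (𝟙 G.X) ≫ α at h
  rwa [Category.id_comp] at h

lemma homFunctor_natTrans_app_id_comm {F G : LMod k R A} (η : homFunctor G ⟶ homFunctor F)
    (r : R) : F.ρ r ≫ η.app G.X (𝟙 G.X) = η.app G.X (𝟙 G.X) ≫ G.ρ r := by
  have hsmul : G.ρ r = (op r : Rᵐᵒᵖ) • 𝟙 G.X := by
    rw [homRMod_smul_def, Category.comp_id, unop_op]
  have h := (η.app G.X).hom.map_smul (op r) (𝟙 G.X)
  change η.app G.X ((op r : Rᵐᵒᵖ) • 𝟙 G.X) = F.ρ r ≫ η.app G.X (𝟙 G.X) at h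
  rw [← hsmul, homFunctor_natTrans_app_eq] at h
  exact h.symm

/-- Yoneda: `η` is determined by `η (𝟙 G.X)`. -/
noncomputable def homPreEquiv (F G : LMod k R A) :
    (F ⟶ G) ≃ (homFunctor G ⟶ homFunctor F) where
  toFun φ := homPre φ.1 φ.2
  invFun η := ⟨η.app G.X (𝟙 G.X), homFunctor_natTrans_app_id_comm η⟩
  left_inv φ := Subtype.ext (Category.comp_id φ.1)
  right_inv η := by
    ext N α
    exact (homFunctor_natTrans_app_eq η α).symm

end HomPre

section SelfModule

variable {S : Type u} [Ring S]

lemma selfModule_hom_ext {M : ModuleCat.{u} S} {f g : ModuleCat.of S S ⟶ M}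
    (h : f.hom 1 = g.hom 1) : f = g :=
  ModuleCat.hom_ext (LinearMap.ext_ring h)

noncomputable def spanSingletonHom (M : ModuleCat.{u} S) (m : M) : ModuleCat.of S S ⟶ M :=
  ModuleCat.ofHom (LinearMap.toSpanSingleton S M m)

lemma spanSingletonHom_one : spanSingletonHom (ModuleCat.of S S) (1 : S) = 𝟙 _ :=
  selfModule_hom_ext (one_smul S (1 : S))

lemma spanSingletonHom_add (M : ModuleCat.{u} S) (m m' : M) :
    spanSingletonHom M (m + m') = spanSingletonHom M m + spanSingletonHom M m' :=
  selfModule_hom_ext (smul_add (1 : S) m m')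

lemma spanSingletonHom_comp {M N : ModuleCat.{u} S} (m : M) (f : M ⟶ N) :
    spanSingletonHom M m ≫ f = spanSingletonHom N (f m) :=
  selfModule_hom_ext (f.hom.map_smul 1 m)

end SelfModule

section MulMap

variable {R : Type u} [Ring R]

lemma mulMap_eq_spanSingletonHom (x : R) : mulMap R x = spanSingletonHom RR (op x) :=
  selfModule_hom_ext rfl

lemma mulMap_comp_spanSingletonHom (M : ModuleCat.{u} Rᵐᵒᵖ) (x : R) (m : M) :
    mulMap R x ≫ spanSingletonHom M m = spanSingletonHom M (op x • m) := by
  rw [mulMap_eq_spanSingletonHom, spanSingletonHom_comp]; rfl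

lemma mulMap_comp_mulMap (x y : R) : mulMap R y ≫ mulMap R x = mulMap R (x * y) := by
  rw [mulMap_eq_spanSingletonHom x, mulMap_comp_spanSingletonHom, mulMap_eq_spanSingletonHom]; rfl

lemma mulMap_one : mulMap R (1 : R) = 𝟙 RR := by
  rw [mulMap_eq_spanSingletonHom]; exact spanSingletonHom_one

lemma mulMap_add (x y : R) : mulMap R (x + y) = mulMap R x + mulMap R y := by
  simp only [mulMap_eq_spanSingletonHom]; exact spanSingletonHom_add _ _ _

end MulMap

section TensorMap

variable {k : Type*} [CommRing k] {R : Type u} [Ring R] [Algebra k R]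
variable {A : Type*} [Category.{u} A] [Preadditive A] [CategoryTheory.Linear k A]

lemma tensorMap_bijective {F G : LMod k R A} {TF TG : ModuleCat.{u} Rᵐᵒᵖ ⥤ A}
    (adjF : TF ⊣ homFunctor F) (adjG : TG ⊣ homFunctor G) :
    Function.Bijective fun φ : F ⟶ G => tensorMap adjF adjG φ.1 φ.2 :=
  ((homPreEquiv F G).trans (conjugateEquiv adjG adjF).symm).bijective

end TensorMap

section Generator

variable {S : Type u} [Ring S]

noncomputable def freeCover (M : ModuleCat.{u} S) : ∐ (fun _ : M => ModuleCat.of S S) ⟶ M :=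
  Sigma.desc (spanSingletonHom M)

lemma freeCover_surjective (M : ModuleCat.{u} S) : Function.Surjective (freeCover M) := fun m =>
  ⟨Sigma.ι (fun _ : M => ModuleCat.of S S) m (1 : S), by
    rw [← ConcreteCategory.comp_apply, freeCover, Sigma.ι_desc]
    exact one_smul S m⟩

noncomputable def freePresentation (M : ModuleCat.{u} S) : ShortComplex (ModuleCat.{u} S) :=
  let K := LinearMap.ker (freeCover M).hom
  have hK : ModuleCat.ofHom K.subtype ≫ freeCover M = 0 := by ext x; exact x.2
  ShortComplex.mk (freeCover (ModuleCat.of S K) ≫ ModuleCat.ofHom K.subtype) (freeCover M) <| by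
    rw [Category.assoc, hK, comp_zero]

lemma freePresentation_exact (M : ModuleCat.{u} S) : (freePresentation M).Exact := by
  rw [ShortComplex.moduleCat_exact_iff]
  intro x hx
  obtain ⟨y, hy⟩ :=
    freeCover_surjective (ModuleCat.of S (LinearMap.ker (freeCover M).hom)) ⟨x, hx⟩
  exact ⟨y, congrArg Subtype.val hy⟩

instance (M : ModuleCat.{u} S) : Epi (freePresentation M).g :=
  (ModuleCat.epi_iff_surjective _).mpr (freeCover_surjective M)

lemma isIso_of_isIso_app_self {D : Type*} [Category D] {F G : ModuleCat.{u} S ⥤ D} (τ : F ⟶ G)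
    [PreservesColimitsOfShape WalkingParallelPair F]
    [PreservesColimitsOfShape WalkingParallelPair G]
    (hF : ∀ ι : Type u, PreservesColimitsOfShape (Discrete ι) F)
    (hG : ∀ ι : Type u, PreservesColimitsOfShape (Discrete ι) G)
    [IsIso (τ.app (ModuleCat.of S S))] : IsIso τ := by
  have hfree (ι : Type u) : IsIso (τ.app (∐ fun _ : ι => ModuleCat.of S S)) := by
    have := hF ι
    have := hG ι
    have : IsIso (Functor.whiskerLeft (Discrete.functor fun _ : ι => ModuleCat.of S S) τ) :=
      @NatIso.isIso_of_isIso_app _ _ _ _ _ _ _ fun _ =>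
        inferInstanceAs (IsIso (τ.app (ModuleCat.of S S)))
    exact isIso_app_coconePt_of_preservesColimit _ τ _ (colimit.isColimit _)
  have (M : ModuleCat.{u} S) : IsIso (τ.app M) := by
    have : IsIso (Functor.whiskerLeft (parallelPair (freePresentation M).f 0) τ) := by
      refine @NatIso.isIso_of_isIso_app _ _ _ _ _ _ _ ?_
      rintro (_ | _) <;> exact hfree _
    exact isIso_app_coconePt_of_preservesColimit _ τ _ (freePresentation_exact M).gIsCokernel
  exact NatIso.isIso_of_isIso_app τ

end Generator

section WattsFunctor

variable {k : Type*} [CommRing k] {R : Type u} [Ring R] [Algebra k R]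
variable {A : Type*} [Category.{u} A] [Preadditive A] [CategoryTheory.Linear k A]
variable (k) (T : ModuleCat.{u} Rᵐᵒᵖ ⥤ A) [T.Linear k]

lemma map_mulMap_algebraMap (a : k) :
    T.map (mulMap R (algebraMap k R a)) = a • 𝟙 (T.obj RR) := by
  rw [← T.map_id, ← T.map_smul]
  congr 1
  refine selfModule_hom_ext ?_
  change op (algebraMap k R a * 1) = algebraMap k Rᵐᵒᵖ a * 1
  simp [MulOpposite.algebraMap_apply]

variable [T.Additive]

noncomputable def LMod.ofFunctor : LMod k R A where
  X := T.obj RR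
  ρ := RingHom.mk'
    { toFun x := T.map (mulMap R x)
      map_one' := by rw [mulMap_one, T.map_id]; rfl
      map_mul' x y := by rw [← mulMap_comp_mulMap, T.map_comp]; rfl }
    (fun x y => by simp only [MonoidHom.coe_mk, OneHom.coe_mk, mulMap_add, T.map_add])
  algebraMap_smul' := map_mulMap_algebraMap k T

noncomputable def wattsUnit :
    𝟭 (ModuleCat.{u} Rᵐᵒᵖ) ⟶ T ⋙ homFunctor (LMod.ofFunctor k T) where
  app M := ModuleCat.ofHom
    { toFun m := T.map (spanSingletonHom M m)
      map_add' m m' := by rw [spanSingletonHom_add, T.map_add]; rfl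
      map_smul' r m := by
        change (T.map (spanSingletonHom M (r • m)) : T.obj RR ⟶ T.obj M) =
          T.map (mulMap R r.unop) ≫ T.map (spanSingletonHom M m)
        rw [← T.map_comp, mulMap_comp_spanSingletonHom, op_unop] }
  naturality M M' f := by
    ext m
    change T.map (spanSingletonHom M' (f m)) = T.map (spanSingletonHom M m) ≫ T.map f
    rw [← T.map_comp, spanSingletonHom_comp]

variable {TF : ModuleCat.{u} Rᵐᵒᵖ ⥤ A} (adjF : TF ⊣ homFunctor (LMod.ofFunctor k T))

noncomputable def wattsComparison : TF ⟶ T where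
  app M := (adjF.homEquiv M (T.obj M)).symm ((wattsUnit k T).app M)
  naturality M M' f := by
    have hu : f ≫ (wattsUnit k T).app M' =
        (wattsUnit k T).app M ≫ (homFunctor (LMod.ofFunctor k T)).map (T.map f) :=
      (wattsUnit k T).naturality f
    rw [← Adjunction.homEquiv_naturality_left_symm, hu, Adjunction.homEquiv_naturality_right_symm]

lemma homEquiv_wattsComparison_app (M : ModuleCat.{u} Rᵐᵒᵖ) :
    adjF.homEquiv M (T.obj M) ((wattsComparison k T adjF).app M) = (wattsUnit k T).app M :=
  Equiv.apply_symm_apply _ _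

/-- `xi adjF` is inverse to the comparison at `R`. -/
instance isIso_wattsComparison_app_RR : IsIso ((wattsComparison k T adjF).app RR) := by
  have hcomp := homEquiv_wattsComparison_app k T adjF RR
  refine ⟨xi adjF, ?_, ?_⟩
  · apply (adjF.homEquiv RR (TF.obj RR)).injective
    refine (adjF.homEquiv_naturality_right (Y := T.obj RR) _ (xi adjF)).trans ?_
    rw [hcomp, Adjunction.homEquiv_id]
    refine selfModule_hom_ext ?_
    change T.map (spanSingletonHom RR 1) ≫ xi adjF = xi adjF
    rw [spanSingletonHom_one, T.map_id]
    exact Category.id_comp _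
  · have h1 := ConcreteCategory.congr_hom hcomp (1 : Rᵐᵒᵖ)
    change xi adjF ≫ _ = T.map (spanSingletonHom RR 1) at h1
    rw [spanSingletonHom_one, T.map_id] at h1
    exact h1

lemma isIso_wattsComparison [PreservesColimitsOfShape WalkingParallelPair T]
    (hT : ∀ ι : Type u, PreservesColimitsOfShape (Discrete ι) T) :
    IsIso (wattsComparison k T adjF) := by
  have := adjF.leftAdjoint_preservesColimits
  exact isIso_of_isIso_app_self _ (fun _ => inferInstance) hT

end WattsFunctor

theorem generalized_watts_equivalence_general
    (k : Type*) [CommRing k] (R : Type u) [Ring R] [Algebra k R]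
    (A : Type*) [Category.{u} A] [Abelian A]
    [CategoryTheory.Linear k A]
    (Ψ : LMod k R A ⥤ ObjectProperty.FullSubcategory (WattsObj k R A))
    (adj : ∀ F : LMod k R A, (Ψ.obj F).obj ⊣ homFunctor F)
    (hΨ : ∀ (F G : LMod k R A) (φ : F ⟶ G),
      (Ψ.map φ).hom = tensorMap (adj F) (adj G) φ.1 φ.2) :
    Ψ.IsEquivalence := by
  have hbij (F G : LMod k R A) : Function.Bijective fun φ : F ⟶ G => (Ψ.map φ).hom := by
    simpa only [hΨ] using tensorMap_bijective (adj F) (adj G)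
  refine ⟨⟨fun h => (hbij _ _).1 (congrArg InducedCategory.Hom.hom h)⟩,
    ⟨fun σ => ?_⟩, ⟨fun T => ?_⟩⟩
  · obtain ⟨φ, hφ⟩ := (hbij _ _).2 σ.hom
    exact ⟨φ, InducedCategory.hom_ext hφ⟩
  · obtain ⟨_, hlin, ⟨_⟩, hcoprod⟩ := T.property
    have : T.obj.Linear k := ⟨fun f a => hlin a _ _ f⟩
    let F := LMod.ofFunctor k T.obj
    have := isIso_wattsComparison k T.obj (adj F) (fun ι => (hcoprod ι).some)
    exact ⟨F, ⟨ObjectProperty.isoMk _ (asIso (wattsComparison k T.obj (adj F)))⟩⟩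

/-- **The generalized Watts theorem.** Let `A` be a cocomplete `k`-linear abelian
category.  The functor `Ψ : A_R ⥤ B_k(Mod R, A)`, `Ψ(𝓕) = - ⊗_R 𝓕` (any functor
whose value at `𝓕` is left adjoint to `Hom_A(𝓕, -)` and whose action on morphisms
is the induced one) is an equivalence of categories. -/
theorem generalized_watts_equivalence
    (k : Type*) [CommRing k] (R : Type u) [Ring R] [Algebra k R]
    (A : Type*) [Category.{u} A] [Abelian A] [HasColimits A]
    [CategoryTheory.Linear k A]
    (Ψ : LMod k R A ⥤ ObjectProperty.FullSubcategory (WattsObj k R A))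
    (adj : ∀ F : LMod k R A, (Ψ.obj F).obj ⊣ homFunctor F)
    (hΨ : ∀ (F G : LMod k R A) (φ : F ⟶ G),
      (Ψ.map φ).hom = tensorMap (adj F) (adj G) φ.1 φ.2) :
    Ψ.IsEquivalence :=
  generalized_watts_equivalence_general k R A Ψ adj hΨ
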